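/- Let ξ, z₁ ∈ ℝ with z₁ ≥ 0, and let z ∈ ℂ satisfy Im z ≠ 0 or Re z > z₁. Define R(z) := (z − z₁)^(1/2) · (z + z₁)^(1/2) with principal branches and g₀(z) := (4z² + 12ξ + 2z₁²) · R(z). Then R(z) ≠ 0, and g₀ is complex differentiable at z with derivative 12 z (z² − (z₁²/2 − ξ)) / R(z). (Thus the genus-zero g-function g₀(ξ;z) = (4z² + 12ξ + 2z₁²)(z² − z₁²)^{1/2} equals ∫ 12 s (s² − (z₁²/2 − ξ))/(s² − z₁²)^{1/2} ds.) -/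

import Mathlib

open Complex

/-- The branch `R(z) = (z − z₁)^{1/2}(z + z₁)^{1/2}` of `(z² − z₁²)^{1/2}`
cut along `[−z₁, z₁]` (principal branches). -/
noncomputable def Rg (z₁ : ℝ) (z : ℂ) : ℂ :=
  (z - (z₁ : ℂ)) ^ ((1 : ℂ) / 2) * (z + (z₁ : ℂ)) ^ ((1 : ℂ) / 2)

/-- The genus-zero g-function `g₀(ξ;z) = (4z² + 12ξ + 2z₁²)·R(z)`. -/
noncomputable def g0 (ξ z₁ : ℝ) (z : ℂ) : ℂ :=
  (4 * z ^ 2 + 12 * (ξ : ℂ) + 2 * (z₁ : ℂ) ^ 2) * Rg z₁ z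

/-- Away from the cut (`Im z ≠ 0` or `Re z > z₁`), `R(z) ≠ 0` and the genus-zero
g-function is complex differentiable with derivative
`g₀'(z) = 12z(z² − (z₁²/2 − ξ))/R(z)`; thus
`g₀ = ∫ 12s(s² − (z₁²/2 − ξ))/(s² − z₁²)^{1/2} ds`. -/
theorem g0_hasDerivAt (ξ z₁ : ℝ) (hz₁ : 0 ≤ z₁) (z : ℂ)
    (hz : z.im ≠ 0 ∨ z.re > z₁) :
    Rg z₁ z ≠ 0 ∧
    HasDerivAt (g0 ξ z₁)
      (12 * z * (z ^ 2 - ((z₁ : ℂ) ^ 2 / 2 - (ξ : ℂ))) / Rg z₁ z) z := by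
  have ha : 0 < (z - (z₁ : ℂ)).re ∨ (z - (z₁ : ℂ)).im ≠ 0 := by
    rcases hz with h | h
    · right; simpa using h
    · left; simp; linarith
  have hb : 0 < (z + (z₁ : ℂ)).re ∨ (z + (z₁ : ℂ)).im ≠ 0 := by
    rcases hz with h | h
    · right; simpa using h
    · left; simp; linarith
  have ha0 : z - (z₁ : ℂ) ≠ 0 := by
    rcases ha with h | h <;> intro h0 <;> rw [h0] at h <;> simp at h
  have hb0 : z + (z₁ : ℂ) ≠ 0 := by
    rcases hb with h | h <;> intro h0 <;> rw [h0] at h <;> simp at h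
  have hsa0 : (z - (z₁ : ℂ)) ^ ((1 : ℂ) / 2) ≠ 0 := by
    simp [Complex.cpow_eq_zero_iff, ha0]
  have hsb0 : (z + (z₁ : ℂ)) ^ ((1 : ℂ) / 2) ≠ 0 := by
    simp [Complex.cpow_eq_zero_iff, hb0]
  have hR : Rg z₁ z ≠ 0 := mul_ne_zero hsa0 hsb0
  have hsa2 : (z - (z₁ : ℂ)) ^ ((1 : ℂ) / 2) * (z - (z₁ : ℂ)) ^ ((1 : ℂ) / 2)
      = z - (z₁ : ℂ) := by
    rw [← Complex.cpow_add _ _ ha0]; norm_num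
  have hsb2 : (z + (z₁ : ℂ)) ^ ((1 : ℂ) / 2) * (z + (z₁ : ℂ)) ^ ((1 : ℂ) / 2)
      = z + (z₁ : ℂ) := by
    rw [← Complex.cpow_add _ _ hb0]; norm_num
  have haexp : (z - (z₁ : ℂ)) ^ ((1 : ℂ) / 2 - 1)
      = (z - (z₁ : ℂ)) ^ ((1 : ℂ) / 2) / (z - (z₁ : ℂ)) := by
    rw [Complex.cpow_sub _ _ ha0, Complex.cpow_one]
  have hbexp : (z + (z₁ : ℂ)) ^ ((1 : ℂ) / 2 - 1)
      = (z + (z₁ : ℂ)) ^ ((1 : ℂ) / 2) / (z + (z₁ : ℂ)) := by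
    rw [Complex.cpow_sub _ _ hb0, Complex.cpow_one]
  have hA : HasDerivAt (fun w : ℂ => (w - (z₁ : ℂ)) ^ ((1 : ℂ) / 2))
      ((1 : ℂ) / 2 * (z - (z₁ : ℂ)) ^ ((1 : ℂ) / 2 - 1) * 1) z :=
    ((hasDerivAt_id z).sub_const _).cpow_const ha
  have hB : HasDerivAt (fun w : ℂ => (w + (z₁ : ℂ)) ^ ((1 : ℂ) / 2))
      ((1 : ℂ) / 2 * (z + (z₁ : ℂ)) ^ ((1 : ℂ) / 2 - 1) * 1) z :=
    ((hasDerivAt_id z).add_const _).cpow_const hb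
  have hC : HasDerivAt (fun w : ℂ => 4 * w ^ 2 + 12 * (ξ : ℂ) + 2 * (z₁ : ℂ) ^ 2)
      (8 * z) z := by
    have h := ((hasDerivAt_pow 2 z).const_mul (4 : ℂ)).add_const (12 * (ξ : ℂ))
    have h2 := h.add_const (2 * (z₁ : ℂ) ^ 2)
    exact h2.congr_deriv (by push_cast; ring)
  refine ⟨hR, ?_⟩
  have hg := hC.mul (hA.mul hB)
  have hfun : (fun w : ℂ =>
      (4 * w ^ 2 + 12 * (ξ : ℂ) + 2 * (z₁ : ℂ) ^ 2) *
        ((w - (z₁ : ℂ)) ^ ((1 : ℂ) / 2) * (w + (z₁ : ℂ)) ^ ((1 : ℂ) / 2)))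
      = g0 ξ z₁ := by
    funext w; simp [g0, Rg]
  simp only [Pi.mul_def] at hg
  rw [hfun] at hg
  refine hg.congr_deriv ?_; symm
  rw [haexp, hbexp]
  rw [Rg]
  field_simp
  ring_nf
  have hS : ((z - (z₁ : ℂ)) ^ ((1 : ℂ) / 2)) ^ 2 * ((z + (z₁ : ℂ)) ^ ((1 : ℂ) / 2)) ^ 2
      = (z - (z₁ : ℂ)) * (z + (z₁ : ℂ)) := by
    rw [sq, sq, hsa2, hsb2]
  linear_combination (-(24 * z * z ^ 2) - 24 * z * (ξ : ℂ) + 12 * z * (z₁ : ℂ) ^ 2) * hS
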